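/- arXiv:1811.09425 — 6 statements merged into one kernel-verified Lean document; each statement's English description precedes it below -/
import Mathlib

section
/- Define f : ℝ_{>0}² → ℝ by f(x) = (1 + (1/5)·x₁²x₂²)^{1/2}. The system x₁ = f(x), x₂ = f(x) has exactly two solutions in ℝ_{>0}², namely the points (s,s) with s² = (5+√5)/2 and s² = (5−√5)/2, and both solutions are nondegenerate (the Jacobian of g(x) = (x₁ − f(x), x₂ − f(x)) is invertible at each of them). -/
open Matrix

/-- `f(x) = (1 + (1/5) x₁² x₂²)^{1/2}`. -/
noncomputable def fEx (x : Fin 2 → ℝ) : ℝ :=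
  Real.sqrt (1 + (1 / 5) * (x 0) ^ 2 * (x 1) ^ 2)

/-- `g(x) = (x₁ - f(x), x₂ - f(x))`. -/
noncomputable def gEx (x : Fin 2 → ℝ) : Fin 2 → ℝ :=
  ![x 0 - fEx x, x 1 - fEx x]

/-!
Both equations say `xᵢ = f(x)`, so a solution lies on the diagonal, `x = (s, s)`, and squaring
`s = f(s, s)` turns it into `t² - 5t + 5 = 0` for `t = s²`, whose roots are `(5 ± √5)/2`.
The Jacobian of `x ↦ x - f(x)·(1, 1)` is `1 - (1, 1)ᵀ ∇f`, a rank-one perturbation of the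
identity, so its determinant is `1 - ∂₁f - ∂₂f`, which equals `1 - 2s²/5` at `(s, s)`;
it vanishes only for `s² = 5/2`, which is not a root.
-/

theorem det_jacobian_id_sub {n : Type*} [Fintype n] [DecidableEq n] {f : (n → ℝ) → ℝ}
    {x : n → ℝ} (hf : DifferentiableAt ℝ f x) :
    (Matrix.of fun i j => fderiv ℝ (fun y => y i - f y) x (Pi.single j 1)).det
      = 1 - ∑ j, fderiv ℝ f x (Pi.single j 1) := by
  have hJ : (Matrix.of fun i j => fderiv ℝ (fun y => y i - f y) x (Pi.single j 1))
      = 1 + replicateCol Unit (fun _ => (-1 : ℝ)) *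
        replicateRow Unit (fun j => fderiv ℝ f x (Pi.single j 1)) := by
    ext i j
    rw [of_apply, fderiv_fun_sub (differentiableAt_apply i x) hf, (hasFDerivAt_apply i x).fderiv]
    simp [Matrix.one_apply, Pi.single_apply, sub_eq_add_neg, Matrix.mul_apply]
  rw [hJ, det_one_add_replicateCol_mul_replicateRow]
  simp [dotProduct, sub_eq_add_neg]

theorem sq_sub_five_mul_add_five_eq_zero_iff (t : ℝ) :
    t ^ 2 - 5 * t + 5 = 0 ↔ t = (5 + √5) / 2 ∨ t = (5 - √5) / 2 := by
  have hfactor : t ^ 2 - 5 * t + 5 = (t - (5 + √5) / 2) * (t - (5 - √5) / 2) := by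
    ring_nf
    rw [Real.sq_sqrt (by norm_num)]
    ring
  rw [hfactor, mul_eq_zero, sub_eq_zero, sub_eq_zero]

theorem sqrt_five_lt_five : √5 < 5 := by
  rw [Real.sqrt_lt' (by norm_num)]
  norm_num

theorem pos_and_sq_sq_sub_five_mul_sq_add_five_eq_zero_iff (s : ℝ) :
    0 < s ∧ (s ^ 2) ^ 2 - 5 * s ^ 2 + 5 = 0 ↔
      s = √((5 + √5) / 2) ∨ s = √((5 - √5) / 2) := by
  have hroot_pos : 0 < (5 - √5) / 2 := by linarith [sqrt_five_lt_five]
  constructor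
  · rintro ⟨hs, hq⟩
    rw [← Real.sqrt_sq hs.le]
    rcases (sq_sub_five_mul_add_five_eq_zero_iff _).1 hq with h | h <;> simp [h]
  · rintro (rfl | rfl) <;> refine ⟨Real.sqrt_pos.2 (by positivity), ?_⟩ <;>
      rw [Real.sq_sqrt (by positivity), sq_sub_five_mul_add_five_eq_zero_iff] <;> simp

theorem gEx_apply (y : Fin 2 → ℝ) (i : Fin 2) : gEx y i = y i - fEx y := by
  fin_cases i <;> rfl

open ContinuousLinearMap in
theorem hasFDerivAt_fEx (x : Fin 2 → ℝ) :
    HasFDerivAt fEx ((5 * fEx x)⁻¹ • ((x 0 * x 1 ^ 2) • proj (R := ℝ) (φ := fun _ : Fin 2 => ℝ) 0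
      + (x 0 ^ 2 * x 1) • proj 1)) x := by
  have hp (i : Fin 2) : HasFDerivAt (fun y : Fin 2 → ℝ => y i) (proj (R := ℝ) i) x :=
    hasFDerivAt_apply i x
  have hu := ((((hp 0).pow 2).const_mul (1 / 5 : ℝ)).mul ((hp 1).pow 2)).const_add 1
  have hd : HasFDerivAt fEx _ x := hu.sqrt (by simp only [Pi.mul_apply]; positivity)
  refine hd.congr_fderiv ?_
  ext v
  simp only [fEx, _root_.add_apply, _root_.smul_apply, proj_apply, Pi.mul_apply, smul_eq_mul,
    nsmul_eq_mul]
  ring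

theorem det_jacobian_gEx (x : Fin 2 → ℝ) :
    (Matrix.of fun i j : Fin 2 => fderiv ℝ (fun y => gEx y i) x (Pi.single j 1)).det
      = 1 - x 0 * x 1 * (x 0 + x 1) / (5 * fEx x) := by
  simp_rw [gEx_apply]
  rw [det_jacobian_id_sub (hasFDerivAt_fEx x).differentiableAt, (hasFDerivAt_fEx x).fderiv]
  simp only [Fin.sum_univ_two, _root_.add_apply, _root_.smul_apply,
    ContinuousLinearMap.proj_apply, smul_eq_mul, Pi.single_eq_same, Pi.single_eq_of_ne zero_ne_one,
    Pi.single_eq_of_ne one_ne_zero]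
  field_simp
  ring

def positiveSolutions : Set (Fin 2 → ℝ) :=
  {x | (∀ i, 0 < x i) ∧ x 0 = fEx x ∧ x 1 = fEx x}

theorem eq_const_of_mem_positiveSolutions {x : Fin 2 → ℝ} (hx : x ∈ positiveSolutions) :
    x = fun _ => x 0 := by
  funext i
  fin_cases i
  · rfl
  · exact hx.2.2.trans hx.2.1.symm

theorem const_mem_positiveSolutions_iff (s : ℝ) :
    (fun _ => s) ∈ positiveSolutions ↔ 0 < s ∧ (s ^ 2) ^ 2 - 5 * s ^ 2 + 5 = 0 := by
  have hfixed (hs : 0 < s) : s = fEx (fun _ => s) ↔ (s ^ 2) ^ 2 - 5 * s ^ 2 + 5 = 0 := by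
    rw [fEx, eq_comm, Real.sqrt_eq_iff_eq_sq (by positivity) hs.le]
    constructor <;> intro h <;> linarith
  simp only [positiveSolutions, Set.mem_ofPred_eq, forall_const, and_self]
  exact ⟨fun ⟨hs, h⟩ => ⟨hs, (hfixed hs).1 h⟩, fun ⟨hs, h⟩ => ⟨hs, (hfixed hs).2 h⟩⟩

theorem positiveSolutions_eq_image :
    positiveSolutions = (fun s _ => s) '' {s | 0 < s ∧ (s ^ 2) ^ 2 - 5 * s ^ 2 + 5 = 0} := by
  ext x
  constructor
  · intro hx
    have hconst := eq_const_of_mem_positiveSolutions hx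
    exact ⟨x 0, (const_mem_positiveSolutions_iff _).1 (hconst ▸ hx), hconst.symm⟩
  · rintro ⟨s, hs, rfl⟩
    exact (const_mem_positiveSolutions_iff s).2 hs

theorem det_jacobian_gEx_ne_zero {x : Fin 2 → ℝ} (hx : x ∈ positiveSolutions) :
    (Matrix.of fun i j : Fin 2 => fderiv ℝ (fun y => gEx y i) x (Pi.single j 1)).det ≠ 0 := by
  have hconst := eq_const_of_mem_positiveSolutions hx
  obtain ⟨hs, hq⟩ := (const_mem_positiveSolutions_iff (x 0)).1 (hconst ▸ hx)
  have hfx : fEx x = x 0 := hx.2.1.symm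
  have hx1 : x 1 = x 0 := hx.2.2.trans hfx
  rw [det_jacobian_gEx, hfx, hx1]
  intro hdet
  have hsq : x 0 ^ 2 = 5 / 2 := by
    field_simp at hdet
    linarith
  rw [hsq] at hq
  norm_num at hq

/-- **Remark (optimality).** The system `x₁ = f(x)`, `x₂ = f(x)` with
`f(x) = (1 + (1/5) x₁² x₂²)^{1/2}` has exactly two solutions in `ℝ_{>0}²`, namely the
points `(s,s)` with `s² = (5+√5)/2` and `s² = (5-√5)/2`; these two points are distinct
and both are nondegenerate zeros of `g(x) = (x₁ - f(x), x₂ - f(x))`. -/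
theorem two_positive_solutions_example :
    ({x : Fin 2 → ℝ | (∀ i, 0 < x i) ∧ x 0 = fEx x ∧ x 1 = fEx x}
      = {(fun _ => Real.sqrt ((5 + Real.sqrt 5) / 2)),
         (fun _ => Real.sqrt ((5 - Real.sqrt 5) / 2))})
    ∧ (fun _ : Fin 2 => Real.sqrt ((5 + Real.sqrt 5) / 2))
        ≠ (fun _ : Fin 2 => Real.sqrt ((5 - Real.sqrt 5) / 2))
    ∧ ∀ x ∈ {x : Fin 2 → ℝ | (∀ i, 0 < x i) ∧ x 0 = fEx x ∧ x 1 = fEx x},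
        (Matrix.of fun i j : Fin 2 =>
            fderiv ℝ (fun y => gEx y i) x (Pi.single j 1)).det ≠ 0 := by
  refine ⟨?_, ?_, fun x hx => det_jacobian_gEx_ne_zero hx⟩
  · have hroots : {s : ℝ | 0 < s ∧ (s ^ 2) ^ 2 - 5 * s ^ 2 + 5 = 0}
        = {√((5 + √5) / 2), √((5 - √5) / 2)} := by
      ext s
      exact pos_and_sq_sq_sub_five_mul_sq_add_five_eq_zero_iff s
    rw [← positiveSolutions, positiveSolutions_eq_image, hroots, Set.image_pair]
  · intro h
    have h0 := congrFun h 0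
    rw [Real.sqrt_inj (by positivity) (by linarith [sqrt_five_lt_five])] at h0
    linarith [Real.sqrt_pos.2 (show (0 : ℝ) < 5 by norm_num)]
end

section
/- Let v₁,…,vₙ,w be independent standard Gaussian random vectors in ℝ^n. Then the probability that w lies in the convex cone generated by v₁,…,vₙ equals 2^{-n}; that is, the product Gaussian measure of the set {(v₁,…,vₙ,w) : w ∈ cone(v₁,…,vₙ)} equals 2^{-n}. -/
open MeasureTheory ProbabilityTheory Module Submodule Set Function
open scoped ENNReal NNReal

/-!
Flipping the signs of `v₁, …, vₙ` preserves the product Gaussian law and turns the event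
`w ∈ cone(v₁, …, vₙ)` into `w ∈ cone(ε₁v₁, …, εₙvₙ)`. Almost surely the `vᵢ` form a basis and
no coordinate of `w` in it vanishes: otherwise one of the vectors lies in the span of fewer than
`n` others, a proper subspace, which is null by Fubini. Then `w` lies in exactly one of the `2ⁿ`
flipped cones, the one whose signs are those of its coordinates, so `2ⁿ` times the probability
is `1`.
-/

namespace GaussianCone

lemma card_mul_measure_eq_measure_univ {X ι : Type*} [MeasurableSpace X] [Fintype ι]
    {μ : Measure X} {f : ι → X → X} (hf : ∀ i, MeasurePreserving (f i) μ μ)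
    {s : Set X} (hs : MeasurableSet s) (h : ∀ᵐ x ∂μ, ∃! i, f i x ∈ s) :
    Fintype.card ι * μ s = μ univ := by
  have hdisj : Pairwise (AEDisjoint μ on fun i => f i ⁻¹' s) := fun i j hij =>
    measure_mono_null (t := {x | ¬∃! i, f i x ∈ s}) (fun x hx hu => hij (hu.unique hx.1 hx.2))
      (ae_iff.1 h)
  have hcover : (⋃ i, f i ⁻¹' s) =ᵐ[μ] (univ : Set X) := by
    filter_upwards [h] with x ⟨i, hi, _⟩
    exact eq_true (mem_iUnion.2 ⟨i, hi⟩)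
  calc Fintype.card ι * μ s = ∑ i, μ (f i ⁻¹' s) := by
        simp [fun i => (hf i).measure_preimage hs.nullMeasurableSet]
    _ = μ (⋃ i, f i ⁻¹' s) := by
        rw [measure_iUnion₀ hdisj fun i => (hs.preimage (hf i).measurable).nullMeasurableSet,
          tsum_fintype]
    _ = μ univ := measure_congr hcover

def cone {ι E : Type*} [Fintype ι] [AddCommMonoid E] [Module ℝ E] (u : ι → E) : Set E :=
  {w | ∃ t : ι → ℝ, (∀ i, 0 ≤ t i) ∧ w = ∑ i, t i • u i}

section Cone

variable {ι E : Type*} [Fintype ι] [AddCommGroup E] [Module ℝ E]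

lemma units_int_smul_eq_cast_smul (ε : ℤˣ) (x : E) : ε • x = ((ε : ℤ) : ℝ) • x := by
  rw [Units.smul_def, Int.cast_smul_eq_zsmul]

lemma units_int_cast_mul_self (ε : ℤˣ) : ((ε : ℤ) : ℝ) * (ε : ℤ) = 1 := by
  rcases Int.units_eq_one_or ε with rfl | rfl <;> norm_num

lemma mem_cone_units_smul_iff {u : ι → E} (hu : LinearIndependent ℝ u) {c : ι → ℝ}
    {w : E} (hw : w = ∑ i, c i • u i) (ε : ι → ℤˣ) :
    w ∈ cone (ε • u) ↔ ∀ i, 0 ≤ ((ε i : ℤ) : ℝ) * c i := by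
  have hsum : ∀ t : ι → ℝ, ∑ i, t i • (ε • u) i = ∑ i, (t i * (ε i : ℤ)) • u i := fun t => by
    simp only [Pi.smul_apply', units_int_smul_eq_cast_smul, smul_smul]
  constructor
  · rintro ⟨t, ht, hwt⟩ i
    have hc : ∀ i, t i * (ε i : ℤ) = c i :=
      Fintype.linearIndependent_iffₛ.1 hu _ _ (by rw [← hsum, ← hwt, hw])
    rw [← hc, mul_comm (t i), ← mul_assoc, units_int_cast_mul_self, one_mul]
    exact ht i
  · intro h
    refine ⟨fun i => (ε i : ℤ) * c i, h, ?_⟩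
    simp only [hw, hsum, mul_comm _ (((ε _ : ℤ) : ℝ)), ← mul_assoc, units_int_cast_mul_self,
      one_mul]

lemma existsUnique_mem_cone_units_smul {u : ι → E} (hu : LinearIndependent ℝ u) {w : E}
    (hw : w ∈ span ℝ (range u))
    (hw' : ∀ i, w ∉ span ℝ (range fun j : {j // j ≠ i} => u j.1)) :
    ∃! ε : ι → ℤˣ, w ∈ cone (ε • u) := by
  classical
  obtain ⟨c, hc⟩ := (mem_span_range_iff_exists_fun ℝ).1 hw
  have hc0 : ∀ i, c i ≠ 0 := fun i hci => hw' i <| by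
    rw [← hc, Fintype.sum_eq_add_sum_subtype_ne _ i, hci, zero_smul, zero_add]
    exact (mem_span_range_iff_exists_fun ℝ).2 ⟨fun j => c j, rfl⟩
  simp only [mem_cone_units_smul_iff hu hc.symm]
  refine ⟨fun i => if 0 < c i then 1 else -1, fun i => ?_, fun ε hε => funext fun i => ?_⟩
  · dsimp only
    split_ifs <;> push_cast <;> linarith
  · have := hε i
    rcases Int.units_eq_one_or (ε i) with h | h <;> simp only [h] at this ⊢ <;> push_cast at this
    · simp [lt_of_le_of_ne (by linarith) (hc0 i).symm]
    · simp only [if_neg (not_lt.2 (by linarith) : ¬0 < c i)]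

end Cone

lemma _root_.IsClosed.isSigmaCompact {X : Type*} [TopologicalSpace X] [SigmaCompactSpace X]
    {s : Set X} (hs : IsClosed s) : IsSigmaCompact s :=
  ⟨fun n => s ∩ compactCovering X n, fun n => (isCompact_compactCovering X n).inter_left hs,
    by rw [← inter_iUnion, iUnion_compactCovering, inter_univ]⟩

lemma _root_.IsSigmaCompact.measurableSet {X : Type*} [TopologicalSpace X] [T2Space X]
    [MeasurableSpace X] [OpensMeasurableSpace X] {s : Set X} (hs : IsSigmaCompact s) :
    MeasurableSet s := by
  obtain ⟨K, hK, rfl⟩ := hs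
  exact .iUnion fun n => (hK n).measurableSet

section Measure

variable {E : Type*} [NormedAddCommGroup E] [NormedSpace ℝ E] [FiniteDimensional ℝ E]
  [MeasurableSpace E] [BorelSpace E]

lemma measurableSet_setOf_exists_eq_sum_smul {ι : Type*} [Fintype ι] {C : Set (ι → ℝ)}
    (hC : IsClosed C) : MeasurableSet {p : E × (ι → E) | ∃ c ∈ C, p.1 = ∑ i, c i • p.2 i} := by
  have himage : {p : E × (ι → E) | ∃ c ∈ C, p.1 = ∑ i, c i • p.2 i} =
      (fun q : (ι → ℝ) × (ι → E) => (∑ i, q.1 i • q.2 i, q.2)) '' (C ×ˢ univ) := by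
    ext ⟨w, u⟩
    simp [eq_comm]
  rw [himage]
  exact ((hC.prod isClosed_univ).isSigmaCompact.image (by fun_prop)).measurableSet

lemma measurableSet_setOf_mem_cone {ι : Type*} [Fintype ι] :
    MeasurableSet {p : E × (ι → E) | p.1 ∈ cone p.2} := by
  refine measurableSet_setOf_exists_eq_sum_smul (C := {t | ∀ i, 0 ≤ t i}) ?_
  simp only [ofPred_forall]
  exact isClosed_iInter fun i => isClosed_le continuous_const (continuous_apply i)

lemma measure_prod_setOf_mem_span {ι : Type*} [Fintype ι] (hι : Fintype.card ι < finrank ℝ E)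
    {ρ : Measure E} [SFinite ρ] (hρ : ∀ V : Submodule ℝ E, V ≠ ⊤ → ρ V = 0)
    {X : Type*} [MeasurableSpace X] {ν : Measure X} [SFinite ν] {g : X → ι → E}
    (hg : Measurable g) : (ρ.prod ν) {p | p.1 ∈ span ℝ (range (g p.2))} = 0 := by
  have hspan : MeasurableSet {p : E × (ι → E) | p.1 ∈ span ℝ (range p.2)} := by
    simpa only [mem_span_range_iff_exists_fun, eq_comm, mem_univ, true_and] using
      measurableSet_setOf_exists_eq_sum_smul (E := E) (ι := ι) isClosed_univ
  have hslice : ∀ y, ρ (span ℝ (range (g y))) = 0 := fun y => hρ _ fun htop => by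
    have := finrank_range_le_card (R := ℝ) (g y)
    rw [Set.finrank, htop, finrank_top] at this
    omega
  have hmeas : MeasurableSet {p : E × X | p.1 ∈ span ℝ (range (g p.2))} :=
    hspan.preimage (measurable_fst.prodMk (hg.comp measurable_snd))
  rw [Measure.prod_apply_symm hmeas]
  simp [hslice]

lemma measure_pi_setOf_not_linearIndependent {γ : Measure E} [SigmaFinite γ]
    (hγ : ∀ V : Submodule ℝ E, V ≠ ⊤ → γ V = 0) {m : ℕ} (hm : m ≤ finrank ℝ E) :
    Measure.pi (fun _ : Fin m => γ) {u | ¬LinearIndependent ℝ u} = 0 := by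
  induction m with
  | zero => simp
  | succ m ih =>
    have he := (measurePreserving_piFinSuccAbove (fun _ : Fin (m + 1) => γ) (Fin.last m)).symm
    rw [← he.measure_preimage_equiv]
    refine measure_mono_null (t := (univ : Set E) ×ˢ {u : Fin m → E | ¬LinearIndependent ℝ u} ∪
      {p | p.1 ∈ span ℝ (range p.2)}) ?_ (measure_union_null ?_ ?_)
    · rintro ⟨x, u⟩ hxu
      change ¬LinearIndependent ℝ (Fin.insertNth (Fin.last m) x u) at hxu
      rw [Fin.insertNth_last', linearIndependent_finSnoc] at hxu
      by_cases hu : LinearIndependent ℝ u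
      · exact Or.inr (not_not.1 fun hx => hxu ⟨hu, hx⟩)
      · exact Or.inl ⟨trivial, hu⟩
    · rw [Measure.prod_prod, ih (by omega), mul_zero]
    · exact measure_prod_setOf_mem_span (g := id) (by simp; omega) hγ measurable_id

lemma measurePreserving_units_int_smul {G : Type*} [AddCommGroup G] [MeasurableSpace G]
    [MeasurableNeg G] (γ : Measure G) [γ.IsNegInvariant] (ε : ℤˣ) :
    MeasurePreserving (ε • · : G → G) γ γ := by
  rcases Int.units_eq_one_or ε with rfl | rfl
  · simp only [one_smul]
    exact MeasurePreserving.id γ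
  · simpa [Units.neg_smul] using Measure.measurePreserving_neg γ

lemma measurePreserving_pi_units_int_smul {ι G : Type*} [Fintype ι] [AddCommGroup G]
    [MeasurableSpace G] [MeasurableNeg G] (γ : Measure G) [SigmaFinite γ] [γ.IsNegInvariant]
    (ε : ι → ℤˣ) :
    MeasurePreserving (ε • · : (ι → G) → ι → G) (.pi fun _ => γ) (.pi fun _ => γ) :=
  measurePreserving_pi _ _ fun i => measurePreserving_units_int_smul γ (ε i)

theorem measure_prod_setOf_mem_cone {n : ℕ} (hn : finrank ℝ E = n) {γ ρ : Measure E}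
    [IsProbabilityMeasure γ] [γ.IsNegInvariant] [IsProbabilityMeasure ρ]
    (hγ : ∀ V : Submodule ℝ E, V ≠ ⊤ → γ V = 0) (hρ : ∀ V : Submodule ℝ E, V ≠ ⊤ → ρ V = 0) :
    (ρ.prod (Measure.pi fun _ : Fin n => γ)) {p | p.1 ∈ cone p.2} = 1 / 2 ^ n := by
  set μ := ρ.prod (Measure.pi fun _ : Fin n => γ)
  have hflip (ε : Fin n → ℤˣ) : MeasurePreserving (Prod.map id (ε • ·)) μ μ :=
    (MeasurePreserving.id ρ).prod (measurePreserving_pi_units_int_smul γ ε)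
  have hli : ∀ᵐ p ∂μ, LinearIndependent ℝ p.2 :=
    Measure.quasiMeasurePreserving_snd.ae
      (ae_iff.2 (measure_pi_setOf_not_linearIndependent hγ hn.ge))
  have hspan (i : Fin n) :
      ∀ᵐ p ∂μ, p.1 ∉ span ℝ (range fun j : {j // j ≠ i} => p.2 j.1) := by
    have hcard : Fintype.card {j // j ≠ i} < finrank ℝ E := by
      simpa [hn] using Fintype.card_subtype_lt (p := (· ≠ i)) (x := i) (by simp)
    have h0 : μ {p | p.1 ∈ span ℝ (range fun j : {j // j ≠ i} => p.2 j.1)} = 0 :=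
      measure_prod_setOf_mem_span (ν := Measure.pi fun _ : Fin n => γ)
        (g := fun u (j : {j // j ≠ i}) => u j.1) hcard hρ
        (measurable_pi_lambda _ fun j => measurable_pi_apply _)
    exact measure_eq_zero_iff_ae_notMem.1 h0
  have hunique : ∀ᵐ p ∂μ, ∃! ε : Fin n → ℤˣ, Prod.map id (ε • ·) p ∈ {p | p.1 ∈ cone p.2} := by
    filter_upwards [hli, ae_all_iff.2 hspan] with p hli hspan
    refine existsUnique_mem_cone_units_smul hli ?_ hspan
    rw [hli.span_eq_top_of_card_eq_finrank' (by simp [hn])]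
    trivial
  have hcount := card_mul_measure_eq_measure_univ hflip measurableSet_setOf_mem_cone hunique
  rw [measure_univ, Fintype.card_fun, Fintype.card_units_int, Fintype.card_fin] at hcount
  rw [ENNReal.eq_div_iff (by simp) (by simp), ← hcount]
  norm_cast

end Measure

lemma absolutelyContinuous_pi {n : ℕ} {α : Fin n → Type*} [∀ i, MeasurableSpace (α i)]
    {μ ν : ∀ i, Measure (α i)} [∀ i, SigmaFinite (μ i)] [∀ i, SigmaFinite (ν i)]
    (h : ∀ i, μ i ≪ ν i) : Measure.pi μ ≪ Measure.pi ν := by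
  induction n with
  | zero => rw [Measure.pi_of_empty μ, Measure.pi_of_empty ν]
  | succ n ih =>
    rw [← ((measurePreserving_piFinSuccAbove μ 0).symm _).map_eq,
      ← ((measurePreserving_piFinSuccAbove ν 0).symm _).map_eq]
    exact ((h 0).prod (ih fun i => h _)).map (MeasurableEquiv.measurable _)

instance (v : ℝ≥0) : (gaussianReal 0 v).IsNegInvariant :=
  ⟨by rw [Measure.neg_def]; simpa using gaussianReal_map_neg (μ := 0) (v := v)⟩

lemma pi_gaussianReal_submodule_eq_zero {n : ℕ} (m : ℝ) {v : ℝ≥0} (hv : v ≠ 0)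
    (V : Submodule ℝ (Fin n → ℝ)) (hV : V ≠ ⊤) :
    Measure.pi (fun _ : Fin n => gaussianReal m v) V = 0 :=
  absolutelyContinuous_pi (fun _ => gaussianReal_absolutelyContinuous m hv)
    (Measure.addHaar_submodule volume V hV)

end GaussianCone

open GaussianCone

/-- **Lemma (Gaussian cone probability).** For independent standard Gaussian vectors
`v₁, …, vₙ, w` in `ℝⁿ`, the probability that `w ∈ cone(v₁, …, vₙ)` equals `2^{-n}`.
Here the joint law is the standard Gaussian product measure on `(ℝⁿ)^{n+1}`, the vectors
`v₁, …, vₙ` are the first `n` coordinates and `w` the last, and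
`cone(v₁,…,vₙ) = {∑ tᵢ vᵢ : tᵢ ≥ 0}`. -/
theorem gaussian_cone_probability (n : ℕ) :
    (Measure.pi fun _ : Fin (n + 1) => Measure.pi fun _ : Fin n => gaussianReal 0 1)
      {v : Fin (n + 1) → Fin n → ℝ |
        ∃ t : Fin n → ℝ, (∀ i, 0 ≤ t i) ∧
          v (Fin.last n) = ∑ i, t i • v (Fin.castSucc i)}
    = 1 / 2 ^ n := by
  have hγ := pi_gaussianReal_submodule_eq_zero (n := n) 0 one_ne_zero
  have hcone : {v : Fin (n + 1) → Fin n → ℝ | ∃ t : Fin n → ℝ, (∀ i, 0 ≤ t i) ∧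
      v (Fin.last n) = ∑ i, t i • v (Fin.castSucc i)} =
      MeasurableEquiv.piFinSuccAbove (fun _ => Fin n → ℝ) (Fin.last n) ⁻¹'
        {p | p.1 ∈ cone p.2} := by
    ext v
    simp [cone, Fin.init]
  rw [hcone, (measurePreserving_piFinSuccAbove (fun _ => _) (Fin.last n)).measure_preimage_equiv]
  exact measure_prod_setOf_mem_cone (finrank_fin_fun ℝ) hγ hγ
end

section
/- Let f : ℝ_{>0}^n → ℝ_{>0} be defined by f(x) = (Σ_{j=1}^m c_j²·x^{2β_j})^{1/2} with β₁,…,β_m ∈ ℤ^n and nonzero reals c₁,…,c_m, let α₁,…,αₙ ∈ ℤ^n and σ₁,…,σₙ > 0, and let ξ_{i,j} (1 ≤ i ≤ n, 0 ≤ j ≤ n) be i.i.d. standard Gaussian random variables. Then the probability that the random system ξ_{i,0}·f(x) + Σ_{j=1}^n ξ_{i,j}·σ_j·x^{α_j} = 0 (i = 1,…,n) has at least one solution x ∈ ℝ_{>0}^n is at most 2^{-n}. -/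
open MeasureTheory ProbabilityTheory
open scoped ENNReal BigOperators

/-- The monomial `x^α = x₁^{α₁} ⋯ xₙ^{αₙ}` for an integer exponent vector `α`. -/
noncomputable def zmon {n : ℕ} (α : Fin n → ℤ) (x : Fin n → ℝ) : ℝ :=
  ∏ i, x i ^ α i

/-!
Read `ξ` as the `n × (n+1)` matrix `[b | M]`. A positive solution `x` gives the kernel vector
`v = (f x, σ_j x^{α_j})_j` of `ξ`, with `v₀ ≥ 0` and all other entries positive. Almost surely
`M` is invertible (the singular matrices form a Lebesgue-null set), and then the tail of `v` is
`v₀ • (-M⁻¹ b)`, so `-M⁻¹ b` lies in the open positive orthant. Changing the signs of some columns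
of `M` preserves the Gaussian law and moves `-M⁻¹ b` to any prescribed one of the `2ⁿ` open
orthants. These `2ⁿ` events are disjoint and equally likely, so each has probability `≤ 2⁻ⁿ`.
-/

open Matrix
open scoped NNReal

namespace MeasureTheory.Measure

theorem pi_absolutelyContinuous_pi {X : Type*} [MeasurableSpace X] :
    ∀ {k : ℕ} {μ ν : Fin k → Measure X} [∀ i, SigmaFinite (μ i)] [∀ i, SigmaFinite (ν i)],
      (∀ i, μ i ≪ ν i) → Measure.pi μ ≪ Measure.pi ν
  | 0, μ, ν, _, _, _ => by rw [Measure.pi_of_empty, Measure.pi_of_empty]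
  | k + 1, μ, ν, _, _, h => by
    let e := MeasurableEquiv.piFinSuccAbove (fun _ : Fin (k + 1) => X) 0
    rw [← ((measurePreserving_piFinSuccAbove μ 0).symm e).map_eq,
      ← ((measurePreserving_piFinSuccAbove ν 0).symm e).map_eq]
    exact ((h 0).prod (pi_absolutelyContinuous_pi fun i => h _)).map e.symm.measurable

end MeasureTheory.Measure

/-- Fubini on `E × ℝ`: the sections of `{(x, t) | x + t • v ∈ S}` are null in `t` by assumption,
and in `x` they are translates of `S`. -/
theorem measure_eq_zero_of_forall_volume_lineSection {E : Type*} [AddCommGroup E] [Module ℝ E]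
    [MeasurableSpace E] [MeasurableAdd₂ E] [MeasurableSMul₂ ℝ E]
    (μ : Measure E) [μ.IsAddRightInvariant] [SFinite μ] {S : Set E} (hS : MeasurableSet S)
    (v : E) (h : ∀ x, volume {t : ℝ | x + t • v ∈ S} = 0) : μ S = 0 := by
  set U : Set (E × ℝ) := {p | p.1 + p.2 • v ∈ S}
  have hU : MeasurableSet U := (measurable_fst.add (measurable_snd.smul_const v)) hS
  have h_fst : (μ.prod volume) U = 0 := by
    rw [Measure.prod_apply hU]
    simp [U, h]
  have h_snd : (μ.prod volume) U = μ S * ∞ := by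
    rw [Measure.prod_apply_symm hU]
    have h_translate : ∀ t : ℝ, μ ((fun x => (x, t)) ⁻¹' U) = μ S := fun t =>
      measure_preimage_add_right μ (t • v) S
    simp_rw [h_translate, lintegral_const, Real.volume_univ]
  rw [h_fst] at h_snd
  exact (mul_eq_zero.mp h_snd.symm).resolve_right ENNReal.top_ne_zero

theorem measure_le_inv_card_of_pairwise_disjoint {α ι : Type*} [MeasurableSpace α] [Fintype ι]
    {μ : Measure α} [IsProbabilityMeasure μ] {A : ι → Set α} (hA : ∀ i, MeasurableSet (A i))
    (hd : Pairwise (Function.onFun Disjoint A)) (he : ∀ i j, μ (A i) = μ (A j)) (i : ι) :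
    μ (A i) ≤ (Fintype.card ι : ℝ≥0∞)⁻¹ := by
  rw [ENNReal.le_inv_iff_mul_le]
  calc μ (A i) * Fintype.card ι = ∑ j, μ (A j) := by simp [he _ i, mul_comm]
    _ = μ (⋃ j, A j) := ((measure_iUnion hd hA).trans (tsum_fintype _)).symm
    _ ≤ 1 := prob_le_one

theorem measurePreserving_intUnits_mul {R : Type*} [Ring R] [MeasurableSpace R]
    [MeasurableNeg R] (ν : Measure R) [ν.IsNegInvariant] (u : ℤˣ) :
    MeasurePreserving (fun x : R => (u : R) * x) ν ν := by
  rcases Int.units_eq_one_or u with rfl | rfl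
  · simp only [Units.val_one, Int.cast_one, one_mul]
    exact MeasurePreserving.id ν
  · simpa using Measure.measurePreserving_neg ν

instance (v : ℝ≥0) : (gaussianReal 0 v).IsNegInvariant :=
  ⟨by rw [Measure.neg, gaussianReal_map_neg, neg_zero]⟩

theorem zmon_pos {n : ℕ} (α : Fin n → ℤ) {x : Fin n → ℝ} (hx : ∀ i, 0 < x i) : 0 < zmon α x :=
  Finset.prod_pos fun i _ => zpow_pos (hx i) _

noncomputable section

namespace RandomLinearSystem

variable {n : ℕ}

def coeffMatrix (ξ : Fin n → Fin (n + 1) → ℝ) : Matrix (Fin n) (Fin n) ℝ :=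
  Matrix.of fun i j => ξ i j.succ

def solution (ξ : Fin n → Fin (n + 1) → ℝ) : Fin n → ℝ :=
  -((coeffMatrix ξ)⁻¹ *ᵥ fun i => ξ i 0)

def orthantSolvable (s : Fin n → ℤˣ) : Set (Fin n → Fin (n + 1) → ℝ) :=
  {ξ | IsUnit (coeffMatrix ξ).det ∧ ∀ j, 0 < (s j : ℝ) * solution ξ j}

def signFlip (s : Fin n → ℤˣ) (ξ : Fin n → Fin (n + 1) → ℝ) : Fin n → Fin (n + 1) → ℝ :=
  fun i j => ((Fin.cons 1 s : Fin (n + 1) → ℤˣ) j : ℝ) * ξ i j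

def kernelCone (n : ℕ) : Set (Fin n → Fin (n + 1) → ℝ) :=
  {ξ | ∃ v : Fin (n + 1) → ℝ, 0 ≤ v 0 ∧ (∀ j : Fin n, 0 < v j.succ) ∧ ξ *ᵥ v = 0}

theorem mulVec_eq_smul_add_coeffMatrix_mulVec_tail (ξ : Fin n → Fin (n + 1) → ℝ)
    (v : Fin (n + 1) → ℝ) :
    ξ *ᵥ v = v 0 • (fun i => ξ i 0) + coeffMatrix ξ *ᵥ Fin.tail v := by
  ext i
  simp [mulVec, dotProduct, Fin.sum_univ_succ, coeffMatrix, Fin.tail, mul_comm]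

theorem continuous_coeffMatrix : Continuous (coeffMatrix (n := n)) := by
  unfold coeffMatrix
  fun_prop

theorem measurable_solution : Measurable (solution (n := n)) := by
  have h_cramer : ∀ ξ : Fin n → Fin (n + 1) → ℝ, solution ξ =
      -(((coeffMatrix ξ).det)⁻¹ • ((coeffMatrix ξ).adjugate *ᵥ fun i => ξ i 0)) := by
    intro ξ
    rw [solution, inv_def, Ring.inverse_eq_inv', smul_mulVec]
  have hdet : Measurable fun ξ : Fin n → Fin (n + 1) → ℝ => (coeffMatrix ξ).det :=
    continuous_coeffMatrix.matrix_det.measurable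
  have hadj : Continuous fun ξ : Fin n → Fin (n + 1) → ℝ =>
      (coeffMatrix ξ).adjugate *ᵥ fun i => ξ i 0 :=
    continuous_coeffMatrix.matrix_adjugate.matrix_mulVec (by fun_prop)
  rw [funext h_cramer]
  exact (hdet.inv.smul hadj.measurable).neg

theorem measurableSet_orthantSolvable (s : Fin n → ℤˣ) : MeasurableSet (orthantSolvable s) := by
  have hdet : MeasurableSet {ξ : Fin n → Fin (n + 1) → ℝ | IsUnit (coeffMatrix ξ).det} := by
    simp_rw [isUnit_iff_ne_zero]
    exact (continuous_coeffMatrix.matrix_det.measurable (measurableSet_singleton 0)).compl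
  rw [orthantSolvable, Set.ofPred_and, Set.ofPred_forall]
  refine hdet.inter (MeasurableSet.iInter fun j => measurableSet_lt measurable_const ?_)
  exact ((measurable_pi_apply j).comp measurable_solution).const_mul _

theorem pairwise_disjoint_orthantSolvable :
    Pairwise (Function.onFun Disjoint (orthantSolvable (n := n))) := by
  intro s s' hss'
  obtain ⟨j, hj⟩ := Function.ne_iff.mp hss'
  refine Set.disjoint_left.mpr fun ξ hξ hξ' => ?_
  have h := hξ.2 j
  have h' := hξ'.2 j
  rw [Int.units_ne_iff_eq_neg.mp hj] at h
  push_cast at h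
  linarith

theorem coeffMatrix_signFlip (s : Fin n → ℤˣ) (ξ : Fin n → Fin (n + 1) → ℝ) :
    coeffMatrix (signFlip s ξ) = coeffMatrix ξ * diagonal fun j => (s j : ℝ) := by
  ext i j
  simp [coeffMatrix, signFlip, mul_comm]

theorem solution_signFlip (s : Fin n → ℤˣ) (ξ : Fin n → Fin (n + 1) → ℝ) :
    solution (signFlip s ξ) = diagonal (fun j => (s j : ℝ)) *ᵥ solution ξ := by
  have hD : (diagonal fun j => (s j : ℝ))⁻¹ = diagonal fun j => (s j : ℝ) :=
    inv_eq_left_inv (by simp [diagonal_mul_diagonal, ← Int.cast_mul, ← Units.val_mul])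
  have h0 : (fun i => signFlip s ξ i 0) = fun i => ξ i 0 := by
    simp [signFlip]
  rw [solution, solution, coeffMatrix_signFlip, h0, Matrix.mul_inv_rev, hD, ← mulVec_mulVec,
    mulVec_neg]

theorem signFlip_preimage_orthantSolvable_one (s : Fin n → ℤˣ) :
    signFlip s ⁻¹' orthantSolvable 1 = orthantSolvable s := by
  ext ξ
  simp [orthantSolvable, coeffMatrix_signFlip, solution_signFlip, det_mul, det_diagonal,
    mulVec_diagonal, Finset.prod_ne_zero_iff]

theorem measurePreserving_signFlip (ν : Measure ℝ) [SigmaFinite ν] [ν.IsNegInvariant]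
    (s : Fin n → ℤˣ) :
    MeasurePreserving (signFlip s)
      (Measure.pi fun _ : Fin n => Measure.pi fun _ : Fin (n + 1) => ν)
      (Measure.pi fun _ : Fin n => Measure.pi fun _ : Fin (n + 1) => ν) :=
  measurePreserving_pi _ _ fun _ => measurePreserving_pi _ _ fun _ =>
    measurePreserving_intUnits_mul ν _

theorem kernelCone_subset :
    kernelCone n ⊆ {ξ | (coeffMatrix ξ).det = 0} ∪ orthantSolvable 1 := by
  rintro ξ ⟨v, hv0, hv, hξv⟩
  rw [Set.mem_union, or_iff_not_imp_left]
  intro hdet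
  have hunit : IsUnit (coeffMatrix ξ).det := isUnit_iff_ne_zero.mpr hdet
  have htail : Fin.tail v = v 0 • solution ξ := by
    rw [mulVec_eq_smul_add_coeffMatrix_mulVec_tail, add_eq_zero_iff_neg_eq'] at hξv
    rw [solution, smul_neg, ← mulVec_smul, ← hξv, mulVec_neg, neg_neg, mulVec_mulVec,
      nonsing_inv_mul _ hunit, one_mulVec]
  refine ⟨hunit, fun j => ?_⟩
  have hj : 0 < (v 0 • solution ξ) j := by
    rw [← htail]
    exact hv j
  simpa using pos_of_mul_pos_right hj hv0

theorem volume_det_coeffMatrix_eq_zero :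
    volume {ξ : Fin n → Fin (n + 1) → ℝ | (coeffMatrix ξ).det = 0} = 0 := by
  refine measure_eq_zero_of_forall_volume_lineSection volume
    (continuous_coeffMatrix.matrix_det.measurable (measurableSet_singleton 0))
    (fun i => Fin.cons 0 (-(1 : Matrix (Fin n) (Fin n) ℝ) i)) fun ξ => ?_
  refine measure_mono_null (fun t ht => ?_)
    ((Matrix.finite_spectrum (coeffMatrix ξ)).measure_zero volume)
  have hshift : coeffMatrix (ξ + t • fun i => Fin.cons 0 (-(1 : Matrix (Fin n) (Fin n) ℝ) i)) =
      coeffMatrix ξ - algebraMap ℝ _ t := by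
    ext i j
    simp [coeffMatrix, Algebra.algebraMap_eq_smul_one, sub_eq_add_neg]
  rw [spectrum.mem_iff, ← IsUnit.neg_iff, neg_sub, isUnit_iff_isUnit_det, ← hshift]
  exact fun h => h.ne_zero ht

theorem measure_kernelCone_le (ν : Measure ℝ) [IsProbabilityMeasure ν] [ν.IsNegInvariant]
    (hν : ν ≪ volume) :
    (Measure.pi fun _ : Fin n => Measure.pi fun _ : Fin (n + 1) => ν) (kernelCone n)
      ≤ 1 / 2 ^ n := by
  set μ := Measure.pi fun _ : Fin n => Measure.pi fun _ : Fin (n + 1) => ν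
  have hμ : μ ≪ volume := by
    rw [volume_pi]
    refine Measure.pi_absolutelyContinuous_pi fun _ => ?_
    rw [volume_pi]
    exact Measure.pi_absolutelyContinuous_pi fun _ => hν
  have h_orthant_eq : ∀ s, μ (orthantSolvable s) = μ (orthantSolvable 1) := fun s => by
    rw [← signFlip_preimage_orthantSolvable_one s, (measurePreserving_signFlip ν s).measure_preimage
      (measurableSet_orthantSolvable 1).nullMeasurableSet]
  have h_orthant : μ (orthantSolvable 1) ≤ 1 / 2 ^ n := by
    simpa [Fintype.card_units_int] using measure_le_inv_card_of_pairwise_disjoint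
      measurableSet_orthantSolvable pairwise_disjoint_orthantSolvable
      (fun s s' => (h_orthant_eq s).trans (h_orthant_eq s').symm) 1
  calc μ (kernelCone n)
      ≤ μ {ξ | (coeffMatrix ξ).det = 0} + μ (orthantSolvable 1) :=
        (measure_mono kernelCone_subset).trans (measure_union_le _ _)
    _ ≤ 1 / 2 ^ n := by rwa [hμ volume_det_coeffMatrix_eq_zero, zero_add]

end RandomLinearSystem

end

open RandomLinearSystem in
theorem solvable_subset_kernelCone (n m : ℕ) (β : Fin m → Fin n → ℤ) (c : Fin m → ℝ)
    (α : Fin n → Fin n → ℤ) (σ : Fin n → ℝ) (hσ : ∀ j, 0 < σ j) :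
    {ξ : Fin n → Fin (n + 1) → ℝ | ∃ x : Fin n → ℝ, (∀ i, 0 < x i) ∧
        ∀ i, ξ i 0 * Real.sqrt (∑ j, c j ^ 2 * zmon (fun k => 2 * β j k) x)
            + (∑ j : Fin n, ξ i j.succ * σ j * zmon (α j) x) = 0} ⊆ kernelCone n := by
  rintro ξ ⟨x, hx, hξx⟩
  refine ⟨Fin.cons (Real.sqrt (∑ j, c j ^ 2 * zmon (fun k => 2 * β j k) x))
    fun j => σ j * zmon (α j) x, Real.sqrt_nonneg _, fun j => ?_, ?_⟩
  · simpa using mul_pos (hσ j) (zmon_pos _ hx)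
  · ext i
    simpa [mulVec, dotProduct, Fin.sum_univ_succ, mul_assoc] using hξx i

theorem probability_solvable_le_general (n m : ℕ)
    (β : Fin m → Fin n → ℤ) (c : Fin m → ℝ)
    (α : Fin n → Fin n → ℤ) (σ : Fin n → ℝ) (hσ : ∀ j, 0 < σ j) :
    (Measure.pi fun _ : Fin n => Measure.pi fun _ : Fin (n + 1) => gaussianReal 0 1)
      {ξ : Fin n → Fin (n + 1) → ℝ | ∃ x : Fin n → ℝ, (∀ i, 0 < x i) ∧
        ∀ i, ξ i 0 * Real.sqrt (∑ j, c j ^ 2 * zmon (fun k => 2 * β j k) x)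
            + (∑ j : Fin n, ξ i j.succ * σ j * zmon (α j) x) = 0}
    ≤ 1 / 2 ^ n :=
  (measure_mono (solvable_subset_kernelCone n m β c α σ hσ)).trans
    (RandomLinearSystem.measure_kernelCone_le _ (gaussianReal_absolutelyContinuous 0 one_ne_zero))

/-- **Lemma (probability of solvability).** With `f(x) = (∑_j c_j² x^{2β_j})^{1/2}`
(`c_j ≠ 0`), exponents `α₁, …, αₙ ∈ ℤⁿ`, weights `σ_j > 0` and i.i.d. standard Gaussians
`ξ_{i,j}` (`1 ≤ i ≤ n`, `0 ≤ j ≤ n`), the probability that the random system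
`ξ_{i,0} f(x) + ∑_j ξ_{i,j} σ_j x^{α_j} = 0` (`i = 1, …, n`) has a solution in `ℝ_{>0}ⁿ`
is at most `2^{-n}`. -/
theorem probability_solvable_le (n m : ℕ)
    (β : Fin m → Fin n → ℤ) (c : Fin m → ℝ) (hc : ∀ j, c j ≠ 0)
    (α : Fin n → Fin n → ℤ) (σ : Fin n → ℝ) (hσ : ∀ j, 0 < σ j) :
    (Measure.pi fun _ : Fin n => Measure.pi fun _ : Fin (n + 1) => gaussianReal 0 1)
      {ξ : Fin n → Fin (n + 1) → ℝ | ∃ x : Fin n → ℝ, (∀ i, 0 < x i) ∧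
        ∀ i, ξ i 0 * Real.sqrt (∑ j, c j ^ 2 * zmon (fun k => 2 * β j k) x)
            + (∑ j : Fin n, ξ i j.succ * σ j * zmon (α j) x) = 0}
    ≤ 1 / 2 ^ n :=
  probability_solvable_le_general n m β c α σ hσ
end

section
/- Let Ω ⊆ ℝ^n be open, let φ : Ω → ℝ^t be differentiable with φ(x) ≠ 0 for all x ∈ Ω, and set ψ(x) = φ(x)/‖φ(x)‖. Let Ξ be a real n×t matrix and define f : Ω → ℝ^n by f(x) = Ξ·φ(x). If x ∈ Ω satisfies f(x) = 0 and the derivative D_xψ : ℝ^n → ℝ^t has rank < n, then the Jacobian matrix D_x f is singular (not invertible); i.e., every zero of f at which D_xψ is rank-deficient is a degenerate zero. -/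
/-! Since `Ξ` annihilates `φ x`, the product rule gives `Ξ ∘ D_xψ = ‖φ x‖⁻¹ • (Ξ ∘ D_xφ)
= ‖φ x‖⁻¹ • D_x f`, so `rank D_x f ≤ rank D_xψ < n`. -/

theorem Matrix.of_fderiv_apply_single_eq_toMatrix' {𝕜 : Type*} [NontriviallyNormedField 𝕜]
    {ι κ : Type*} [Fintype ι] [DecidableEq ι] [Fintype κ]
    {g : (ι → 𝕜) → κ → 𝕜} {x : ι → 𝕜} (hg : DifferentiableAt 𝕜 g x) :
    Matrix.of (fun i j => fderiv 𝕜 (fun y => g y i) x (Pi.single j 1)) =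
      LinearMap.toMatrix' (fderiv 𝕜 g x : (ι → 𝕜) →ₗ[𝕜] κ → 𝕜) := by
  ext i j
  rw [Matrix.of_apply, fderiv_apply hg i]
  rfl

theorem LinearMap.det_eq_zero_of_rank_lt {K V : Type*} [Field K] [AddCommGroup V] [Module K V]
    [FiniteDimensional K V] (f : V →ₗ[K] V) (hf : f.rank < Module.rank K V) :
    LinearMap.det f = 0 := by
  by_contra hdet
  have hsurj : Function.Surjective f :=
    (Module.End.isUnit_iff f |>.1 <| f.isUnit_iff_isUnit_det.2 <| isUnit_iff_ne_zero.2 hdet).2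
  exact hf.ne (rank_range_of_surjective f hsurj)

theorem ContinuousLinearMap.comp_fderiv_smul_of_map_eq_zero {𝕜 E F G : Type*}
    [NontriviallyNormedField 𝕜] [NormedAddCommGroup E] [NormedSpace 𝕜 E]
    [NormedAddCommGroup F] [NormedSpace 𝕜 F] [NormedAddCommGroup G] [NormedSpace 𝕜 G]
    {c : E → 𝕜} {φ : E → F} {x : E} (hc : DifferentiableAt 𝕜 c x)
    (hφ : DifferentiableAt 𝕜 φ x) (T : F →L[𝕜] G) (hT : T (φ x) = 0) :
    T.comp (fderiv 𝕜 (fun y => c y • φ y) x) = c x • T.comp (fderiv 𝕜 φ x) := by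
  rw [fderiv_fun_smul hc hφ]
  ext v
  simp [hT]

theorem ContinuousLinearMap.range_comp_fderiv_smul_of_map_eq_zero {𝕜 E F G : Type*}
    [NontriviallyNormedField 𝕜] [NormedAddCommGroup E] [NormedSpace 𝕜 E]
    [NormedAddCommGroup F] [NormedSpace 𝕜 F] [NormedAddCommGroup G] [NormedSpace 𝕜 G]
    {c : E → 𝕜} {φ : E → F} {x : E} (hc : DifferentiableAt 𝕜 c x) (hcx : c x ≠ 0)
    (hφ : DifferentiableAt 𝕜 φ x) (T : F →L[𝕜] G) (hT : T (φ x) = 0) :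
    LinearMap.range (T.comp (fderiv 𝕜 (fun y => c y • φ y) x) : E →ₗ[𝕜] G) =
      LinearMap.range (T.comp (fderiv 𝕜 φ x) : E →ₗ[𝕜] G) := by
  rw [T.comp_fderiv_smul_of_map_eq_zero hc hφ hT, ContinuousLinearMap.toLinearMap_smul,
    LinearMap.range_smul _ _ hcx]

/-- **Lemma (rank-deficient points give degenerate zeros).** Let `Ω ⊆ ℝⁿ` be open,
`φ : Ω → ℝᵗ` differentiable and nowhere zero on `Ω`, and `ψ = φ/‖φ‖` (Euclidean norm).
Let `Ξ` be a real `n × t` matrix and `f(y) = Ξ·φ(y)`. If `x ∈ Ω` satisfies `f(x) = 0` and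
`rank D_xψ < n`, then the Jacobian matrix `D_x f` is singular. -/
theorem degenerate_of_rank_deficient (n t : ℕ) (Ω : Set (Fin n → ℝ)) (hΩ : IsOpen Ω)
    (φ : (Fin n → ℝ) → EuclideanSpace ℝ (Fin t))
    (hφ : DifferentiableOn ℝ φ Ω) (hφ0 : ∀ y ∈ Ω, φ y ≠ 0)
    (Ξ : Matrix (Fin n) (Fin t) ℝ) (x : Fin n → ℝ) (hx : x ∈ Ω)
    (hzero : Ξ.mulVec (φ x) = 0)
    (hrank : LinearMap.rank
        ((fderiv ℝ (fun y => (‖φ y‖⁻¹ : ℝ) • φ y) x).toLinearMap) < (n : Cardinal)) :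
    (Matrix.of fun i j : Fin n =>
        fderiv ℝ (fun y => Ξ.mulVec (φ y) i) x (Pi.single j 1)).det = 0 := by
  have hφx : DifferentiableAt ℝ φ x := hφ.differentiableAt (hΩ.mem_nhds hx)
  have hnorm : ‖φ x‖ ≠ 0 := norm_ne_zero_iff.2 (hφ0 x hx)
  have hc : DifferentiableAt ℝ (fun y => ‖φ y‖⁻¹) x := (hφx.norm ℝ (hφ0 x hx)).inv hnorm
  let T : EuclideanSpace ℝ (Fin t) →L[ℝ] Fin n → ℝ :=
    LinearMap.toContinuousLinearMap (Ξ.mulVecLin ∘ₗ (WithLp.linearEquiv 2 ℝ _).toLinearMap)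
  have hf : HasFDerivAt (fun y => Ξ.mulVec (φ y)) (T.comp (fderiv ℝ φ x)) x :=
    T.hasFDerivAt.comp x hφx.hasFDerivAt
  rw [Matrix.of_fderiv_apply_single_eq_toMatrix' hf.differentiableAt, hf.fderiv,
    LinearMap.det_toMatrix']
  refine LinearMap.det_eq_zero_of_rank_lt _ ?_
  calc LinearMap.rank (T.comp (fderiv ℝ φ x) : (Fin n → ℝ) →ₗ[ℝ] Fin n → ℝ)
      = LinearMap.rank
          (T.comp (fderiv ℝ (fun y => ‖φ y‖⁻¹ • φ y) x) : (Fin n → ℝ) →ₗ[ℝ] Fin n → ℝ) := by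
        rw [LinearMap.rank, LinearMap.rank,
          T.range_comp_fderiv_smul_of_map_eq_zero hc (inv_ne_zero hnorm) hφx hzero]
    _ ≤ _ := LinearMap.rank_comp_le_right _ _
    _ < n := hrank
    _ = Module.rank ℝ (Fin n → ℝ) := by simp
end

section
/- Let A ⊆ ℕ be a finite set of cardinality t with 0 ∈ A, define φ : (0,1) → ℝ^A by φ(x) = (x^α)_{α∈A} and ψ(x) = φ(x)/‖φ(x)‖ (Euclidean norm). Then for every x ∈ (0,1), ‖ψ'(x)‖ ≤ √t · ‖φ'(x)‖₁/‖φ(x)‖₁, and the right-hand side equals √t times the derivative of x ↦ ln ‖φ(x)‖₁. -/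
/-!
The derivative of `ψ = φ / ‖φ‖` is `‖φ‖⁻¹` times the component of `φ'` orthogonal to `φ`, so
`‖ψ'‖ ≤ ‖φ'‖ / ‖φ‖`. Comparing the ℓ² and ℓ¹ norms on `ℝ^A`, `‖φ'‖ ≤ ‖φ'‖₁` and, by
Cauchy–Schwarz, `‖φ‖₁ ≤ √t ‖φ‖`. For `x > 0` all coordinates of `φ` and `φ'` are nonnegative,
so `‖φ‖₁` is the polynomial `∑ x ^ α`, whose derivative is `‖φ'‖₁`.
-/

open scoped RealInnerProductSpace

section Normalization

variable {F : Type*} [NormedAddCommGroup F] [InnerProductSpace ℝ F] {f : ℝ → F} {f' : F} {x : ℝ}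

theorem HasDerivAt.norm (hf : HasDerivAt f f' x) (h0 : f x ≠ 0) :
    HasDerivAt (fun y => ‖f y‖) (⟪f x, f'⟫ / ‖f x‖) x := by
  have hnorm : ‖f x‖ ≠ 0 := norm_ne_zero_iff.2 h0
  have hsqrt := (Real.hasDerivAt_sqrt (pow_ne_zero 2 hnorm)).comp x hf.norm_sq
  simp only [Function.comp_def, Real.sqrt_sq (norm_nonneg _)] at hsqrt
  refine hsqrt.congr_deriv ?_
  field_simp

theorem HasDerivAt.norm_inv_smul (hf : HasDerivAt f f' x) (h0 : f x ≠ 0) :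
    HasDerivAt (fun y => ‖f y‖⁻¹ • f y) (‖f x‖⁻¹ • (f' - (⟪f x, f'⟫ / ‖f x‖ ^ 2) • f x)) x := by
  refine (((hf.norm h0).inv (norm_ne_zero_iff.2 h0)).smul hf).congr_deriv ?_
  rw [smul_sub, smul_smul, sub_eq_add_neg, ← neg_smul]
  congr 2
  field_simp

theorem norm_sub_inner_div_smul_le (u v : F) : ‖v - (⟪u, v⟫ / ‖u‖ ^ 2) • u‖ ≤ ‖v‖ := by
  have := (ℝ ∙ u)ᗮ.norm_starProjection_apply_le v
  rwa [Submodule.starProjection_orthogonal, sub_apply,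
    Submodule.starProjection_singleton] at this

theorem norm_deriv_norm_inv_smul_le (hf : HasDerivAt f f' x) (h0 : f x ≠ 0) :
    ‖deriv (fun y => ‖f y‖⁻¹ • f y) x‖ ≤ ‖f'‖ / ‖f x‖ := by
  rw [(hf.norm_inv_smul h0).deriv, norm_smul, norm_inv, norm_norm, inv_mul_eq_div]
  gcongr
  exact norm_sub_inner_div_smul_le _ _

end Normalization

namespace EuclideanSpace

variable {ι : Type*} [Fintype ι]

theorem norm_le_sum_abs (v : EuclideanSpace ℝ ι) : ‖v‖ ≤ ∑ i, |v i| := by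
  rw [EuclideanSpace.norm_eq, Real.sqrt_le_iff]
  refine ⟨Finset.sum_nonneg fun i _ => abs_nonneg _, ?_⟩
  simpa only [Real.norm_eq_abs] using
    Finset.sum_sq_le_sq_sum_of_nonneg fun i _ => abs_nonneg (v i)

theorem sum_abs_le_sqrt_card_mul_norm (v : EuclideanSpace ℝ ι) :
    ∑ i, |v i| ≤ √(Fintype.card ι) * ‖v‖ := by
  rw [EuclideanSpace.norm_eq, ← Real.sqrt_mul (Nat.cast_nonneg _)]
  refine Real.le_sqrt_of_sq_le ?_
  simpa only [Real.norm_eq_abs, sq_abs, Finset.card_univ] using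
    sq_sum_le_card_mul_sum_sq (s := Finset.univ) (f := fun i => |v i|)

end EuclideanSpace

theorem norm_deriv_norm_inv_smul_le_sqrt_card_mul_div {ι : Type*} [Fintype ι]
    {f : ℝ → EuclideanSpace ℝ ι} {x : ℝ} (hf : DifferentiableAt ℝ f x)
    (hpos : 0 < ∑ i, |f x i|) :
    ‖deriv (fun y => ‖f y‖⁻¹ • f y) x‖
      ≤ √(Fintype.card ι) * (∑ i, |deriv f x i|) / ∑ i, |f x i| := by
  have h0 : f x ≠ 0 := fun h => by simp [h] at hpos
  have hnorm : 0 < ‖f x‖ := norm_pos_iff.2 h0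
  calc ‖deriv (fun y => ‖f y‖⁻¹ • f y) x‖
      ≤ ‖deriv f x‖ / ‖f x‖ := norm_deriv_norm_inv_smul_le hf.hasDerivAt h0
    _ ≤ (∑ i, |deriv f x i|) / ‖f x‖ := by gcongr; exact EuclideanSpace.norm_le_sum_abs _
    _ ≤ √(Fintype.card ι) * (∑ i, |deriv f x i|) / ∑ i, |f x i| := by
      rw [div_le_div_iff₀ hnorm hpos, mul_right_comm]
      exact (mul_comm _ _).trans_le <| mul_le_mul_of_nonneg_right
        (EuclideanSpace.sum_abs_le_sqrt_card_mul_norm _)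
        (Finset.sum_nonneg fun i _ => abs_nonneg _)

section MonomialCurve

variable {ι : Type*} [Fintype ι] (e : ι → ℕ)

noncomputable def monomialCurve (x : ℝ) : EuclideanSpace ℝ ι :=
  WithLp.toLp 2 fun i => x ^ e i

theorem hasDerivAt_monomialCurve (x : ℝ) :
    HasDerivAt (monomialCurve e) (WithLp.toLp 2 fun i => (e i : ℝ) * x ^ (e i - 1)) x :=
  (PiLp.continuousLinearEquiv 2 ℝ fun _ : ι => ℝ).symm.hasFDerivAt.comp_hasDerivAt x
    (hasDerivAt_pi.2 fun i => hasDerivAt_pow (e i) x)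

theorem sum_abs_monomialCurve_pos [Nonempty ι] {x : ℝ} (hx : 0 < x) :
    0 < ∑ i, |monomialCurve e x i| :=
  Finset.sum_pos (fun _ _ => abs_pos.2 (pow_pos hx _).ne') Finset.univ_nonempty

theorem hasDerivAt_sum_abs_monomialCurve {x : ℝ} (hx : 0 < x) :
    HasDerivAt (fun y => ∑ i, |monomialCurve e y i|) (∑ i, |deriv (monomialCurve e) x i|) x := by
  have hsum : HasDerivAt (fun y => ∑ i, y ^ e i) (∑ i, (e i : ℝ) * x ^ (e i - 1)) x :=
    HasDerivAt.fun_sum fun i _ => hasDerivAt_pow (e i) x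
  refine (hsum.congr_of_eventuallyEq ?_).congr_deriv ?_
  · filter_upwards [Ioi_mem_nhds hx] with y hy
    exact Finset.sum_congr rfl fun i _ => abs_of_nonneg (pow_nonneg (le_of_lt hy) _)
  · rw [(hasDerivAt_monomialCurve e x).deriv]
    exact Finset.sum_congr rfl fun i _ => (abs_of_nonneg (by positivity)).symm

end MonomialCurve

/-- **Lemma (pointwise bound in the univariate case).** Let `A ⊆ ℕ` be finite with
`|A| = t` and `0 ∈ A`, let `φ(x) = (x^α)_{α ∈ A}` and `ψ = φ/‖φ‖` (Euclidean norm).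
Then for every `x ∈ (0,1)`, `‖ψ'(x)‖ ≤ √t · ‖φ'(x)‖₁/‖φ(x)‖₁`, and the right-hand side
equals `√t` times the derivative of `x ↦ ln ‖φ(x)‖₁`. -/
theorem deriv_normalized_l1_bound (A : Finset ℕ) (t : ℕ) (ht : A.card = t) (h0 : 0 ∈ A)
    (φ : ℝ → EuclideanSpace ℝ {a // a ∈ A}) (hφ : ∀ x, φ x = WithLp.toLp 2 (fun a => x ^ (a.1 : ℕ))) :
    ∀ x ∈ Set.Ioo (0 : ℝ) 1,
      ‖deriv (fun y => (‖φ y‖⁻¹ : ℝ) • φ y) x‖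
        ≤ Real.sqrt t * (∑ a : {a // a ∈ A}, |deriv φ x a|)
            / (∑ a : {a // a ∈ A}, |φ x a|)
      ∧ Real.sqrt t * (∑ a : {a // a ∈ A}, |deriv φ x a|)
            / (∑ a : {a // a ∈ A}, |φ x a|)
        = Real.sqrt t * deriv (fun y => Real.log (∑ a : {a // a ∈ A}, |φ y a|)) x := by
  obtain rfl : φ = monomialCurve Subtype.val := funext hφ
  intro x hx
  have : Nonempty {a // a ∈ A} := ⟨⟨0, h0⟩⟩
  have hpos := sum_abs_monomialCurve_pos (Subtype.val : {a // a ∈ A} → ℕ) hx.1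
  have hcard : (t : ℝ) = Fintype.card {a // a ∈ A} := by simp [ht]
  constructor
  · rw [hcard]
    exact norm_deriv_norm_inv_smul_le_sqrt_card_mul_div
      (hasDerivAt_monomialCurve _ x).differentiableAt hpos
  · rw [mul_div_assoc, ((hasDerivAt_sum_abs_monomialCurve _ hx.1).log hpos.ne').deriv]
end

section
/- For every n ≥ 1, every finite support A ⊆ ℤ^n of cardinality t, and every σ : A → ℝ_{>0}, the probability that the associated random fewnomial system has at least one nondegenerate zero in the positive orthant ℝ_{>0}^n is at most (1/2^{n-1})·binom(t,n). -/
/-!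
If `x` is a nondegenerate positive zero, then `(σ α · x^α)_α` is a positive vector in the kernel
of the coefficient matrix `ξ`, and the Jacobian factors as `ξ · K`, so `ξ` has independent rows.
Flipping the signs of some columns of `ξ` preserves the Gaussian law and moves the positive orthant
to any other orthant, so each of the `2^t` orthants is met by `ker ξ` with the same probability.
Their sum is the expected number of orthants met by the `(t - n)`-dimensional subspace `ker ξ`,
which Cover's recursion bounds by `2^(t-n+1) · C(t, n)`; dividing by `2^t` gives the bound.
-/

open MeasureTheory ProbabilityTheory Matrix
open scoped ENNReal BigOperators

namespace Fewnomial

open Finset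

section Orthants

variable {ι : Type*}

def boolSign (b : Bool) : ℝ := if b then 1 else -1

@[simp] lemma boolSign_true : boolSign true = 1 := rfl

@[simp] lemma boolSign_false : boolSign false = -1 := rfl

lemma boolSign_mul_self (b : Bool) : boolSign b * boolSign b = 1 := by
  cases b <;> norm_num

def orthant (τ : ι → Bool) : Set (ι → ℝ) := {v | ∀ i, 0 < boolSign (τ i) * v i}

lemma isOpen_orthant [Finite ι] (τ : ι → Bool) : IsOpen (orthant τ) := by
  simp only [orthant, Set.ofPred_forall]
  exact isOpen_iInter_of_finite fun i =>
    isOpen_lt continuous_const (continuous_const.mul (continuous_apply i))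

end Orthants

/-- Cover's bound for the number of open orthants of `ℝ^t` met by a `d`-dimensional subspace. -/
def orthantBound : ℕ → ℕ → ℕ
  | 0, _ => 1
  | _ + 1, 0 => 0
  | t + 1, d + 1 => orthantBound t (d + 1) + orthantBound t d

lemma orthantBound_mono (t : ℕ) : Monotone (orthantBound t) := by
  induction t with
  | zero => intro _ _ _; rfl
  | succ t ih =>
    refine monotone_nat_of_le_succ fun d => ?_
    cases d with
    | zero => exact Nat.zero_le _
    | succ d => exact Nat.add_le_add (ih d.succ.le_succ) (ih d.le_succ)

lemma orthantBound_le_two_pow (t d : ℕ) : orthantBound t d ≤ 2 ^ t := by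
  induction t generalizing d with
  | zero => rfl
  | succ t ih =>
    cases d with
    | zero => exact Nat.zero_le _
    | succ d => rw [orthantBound, pow_succ, mul_two]; exact Nat.add_le_add (ih _) (ih _)

lemma orthantBound_le {t d : ℕ} (h : d ≤ t) : orthantBound t d ≤ 2 ^ (d + 1) * t.choose d := by
  induction t generalizing d with
  | zero => obtain rfl := Nat.le_zero.mp h; decide
  | succ t ih =>
    cases d with
    | zero => exact Nat.zero_le _
    | succ d =>
      rw [orthantBound]
      rcases (Nat.le_of_succ_le_succ h).lt_or_eq with hdt | rfl
      · calc orthantBound t (d + 1) + orthantBound t d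
            ≤ 2 ^ (d + 2) * t.choose (d + 1) + 2 ^ (d + 1) * t.choose d :=
              Nat.add_le_add (ih hdt) (ih hdt.le)
          _ ≤ 2 ^ (d + 2) * t.choose (d + 1) + 2 ^ (d + 2) * t.choose d := by
              gcongr <;> omega
          _ = 2 ^ (d + 2) * (t + 1).choose (d + 1) := by
              rw [Nat.choose_succ_succ', Nat.mul_add, add_comm]
      · calc orthantBound d (d + 1) + orthantBound d d ≤ 2 ^ d + 2 ^ d :=
              Nat.add_le_add (orthantBound_le_two_pow _ _) (orthantBound_le_two_pow _ _)
          _ ≤ 2 ^ (d + 2) * (d + 1).choose (d + 1) := by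
              rw [Nat.choose_self, mul_one, ← two_mul, ← pow_succ']
              exact Nat.pow_le_pow_right two_pos (Nat.le_succ _)

section Counting

variable {ι : Type*} [Fintype ι] [DecidableEq ι]

open scoped Classical in
/-- The sign patterns on the coordinates in `s` met by `V`, normalised to `true` off `s`. -/
noncomputable def signPatterns (V : Submodule ℝ (ι → ℝ)) (s : Finset ι) : Finset (ι → Bool) :=
  univ.filter fun τ => (∃ v ∈ V, ∀ i ∈ s, 0 < boolSign (τ i) * v i) ∧ ∀ i ∉ s, τ i = true

lemma mem_signPatterns {V : Submodule ℝ (ι → ℝ)} {s : Finset ι} {τ : ι → Bool} :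
    τ ∈ signPatterns V s ↔ (∃ v ∈ V, ∀ i ∈ s, 0 < boolSign (τ i) * v i) ∧ ∀ i ∉ s, τ i = true := by
  simp [signPatterns]

lemma update_mem_signPatterns {V : Submodule ℝ (ι → ℝ)} {s : Finset ι} {a : ι} (ha : a ∉ s)
    {τ : ι → Bool} (hτ : τ ∈ signPatterns V (insert a s)) :
    Function.update τ a true ∈ signPatterns V s := by
  obtain ⟨⟨v, hv, hvs⟩, hoff⟩ := mem_signPatterns.mp hτ
  refine mem_signPatterns.mpr ⟨⟨v, hv, fun i hi => ?_⟩, fun i hi => ?_⟩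
  · rw [Function.update_of_ne (ne_of_mem_of_not_mem hi ha)]
    exact hvs i (mem_insert_of_mem hi)
  · by_cases hia : i = a
    · rw [hia, Function.update_self]
    · rw [Function.update_of_ne hia]
      exact hoff i (by simp [hia, hi])

/-- Eliminating the `a`-coordinate between witnesses of opposite sign at `a` gives a witness in
`V ∩ {vₐ = 0}`. -/
lemma mem_signPatterns_inf_ker {V : Submodule ℝ (ι → ℝ)} {s : Finset ι} {a : ι}
    {τ τ' : ι → Bool} (hτ : τ ∈ signPatterns V (insert a s))
    (hτ' : τ' ∈ signPatterns V (insert a s)) (hτa : τ a = true) (hτ'a : τ' a = false)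
    (heq : ∀ i ∈ s, τ' i = τ i) :
    τ ∈ signPatterns (V ⊓ LinearMap.ker (LinearMap.proj a)) s := by
  obtain ⟨⟨v, hv, hvs⟩, hoff⟩ := mem_signPatterns.mp hτ
  obtain ⟨⟨w, hw, hws⟩, -⟩ := mem_signPatterns.mp hτ'
  have hva : 0 < v a := by simpa [hτa] using hvs a (mem_insert_self a s)
  have hwa : 0 < -w a := by simpa [hτ'a] using hws a (mem_insert_self a s)
  refine mem_signPatterns.mpr ⟨⟨v a • w - w a • v, ⟨?_, ?_⟩, fun i hi => ?_⟩, fun i hi => ?_⟩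
  · exact V.sub_mem (V.smul_mem _ hw) (V.smul_mem _ hv)
  · simp [mul_comm]
  · have hvi := hvs i (mem_insert_of_mem hi)
    have hwi := hws i (mem_insert_of_mem hi)
    rw [heq i hi] at hwi
    have key : boolSign (τ i) * (v a • w - w a • v) i
        = v a * (boolSign (τ i) * w i) + -w a * (boolSign (τ i) * v i) := by
      simp only [Pi.sub_apply, Pi.smul_apply, smul_eq_mul]; ring
    rw [key]
    positivity
  · by_cases hia : i = a
    · rw [hia, hτa]
    · exact hoff i (by simp [hia, hi])

lemma card_signPatterns_insert_le (V : Submodule ℝ (ι → ℝ)) {s : Finset ι} {a : ι} (ha : a ∉ s) :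
    #(signPatterns V (insert a s))
      ≤ #(signPatterns V s) + #(signPatterns (V ⊓ LinearMap.ker (LinearMap.proj a)) s) := by
  set P := signPatterns V (insert a s)
  set T := P.filter fun τ => τ a = true
  set F := P.filter fun τ => ¬τ a = true
  set g : (ι → Bool) → ι → Bool := fun τ => Function.update τ a true
  have hF : #(F.image g) = #F := by
    refine card_image_of_injOn fun τ₁ h₁ τ₂ h₂ h => ?_
    have hτ₁ : τ₁ a = false := by simpa [F] using (mem_filter.mp h₁).2
    have hτ₂ : τ₂ a = false := by simpa [F] using (mem_filter.mp h₂).2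
    funext i
    by_cases hia : i = a
    · rw [hia, hτ₁, hτ₂]
    · simpa [g, Function.update_of_ne hia] using congrFun h i
  have hT : T ⊆ signPatterns V s := fun τ hτ => by
    obtain ⟨hτP, hτa⟩ := mem_filter.mp hτ
    simpa [← hτa] using update_mem_signPatterns ha hτP
  have hFs : F.image g ⊆ signPatterns V s := by
    simp only [image_subset_iff]
    exact fun τ hτ => update_mem_signPatterns ha (mem_filter.mp hτ).1
  have hTF : T ∩ F.image g ⊆ signPatterns (V ⊓ LinearMap.ker (LinearMap.proj a)) s := by
    intro τ hτ
    obtain ⟨hτT, hτF⟩ := mem_inter.mp hτ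
    obtain ⟨τ', hτ'F, rfl⟩ := mem_image.mp hτF
    obtain ⟨hτ'P, hτ'a⟩ := mem_filter.mp hτ'F
    refine mem_signPatterns_inf_ker (mem_filter.mp hτT).1 hτ'P (Function.update_self ..)
      (by simpa using hτ'a) fun i hi => ?_
    exact (Function.update_of_ne (ne_of_mem_of_not_mem hi ha) ..).symm
  calc #P = #T + #F := (card_filter_add_card_filter_not _).symm
    _ = #(T ∪ F.image g) + #(T ∩ F.image g) := by rw [card_union_add_card_inter, hF]
    _ ≤ _ := add_le_add (card_le_card (union_subset hT hFs)) (card_le_card hTF)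

lemma card_signPatterns_le (V : Submodule ℝ (ι → ℝ)) (s : Finset ι) :
    #(signPatterns V s) ≤ orthantBound #s (Module.finrank ℝ V) := by
  induction s using Finset.induction_on generalizing V with
  | empty =>
    refine card_le_one.mpr fun τ hτ τ' hτ' => funext fun i => ?_
    rw [(mem_signPatterns.mp hτ).2 i (notMem_empty i),
      (mem_signPatterns.mp hτ').2 i (notMem_empty i)]
  | @insert a s ha ih =>
    rw [card_insert_of_notMem ha]
    by_cases hV : V ≤ LinearMap.ker (LinearMap.proj a)
    · suffices signPatterns V (insert a s) = ∅ by simp [this]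
      refine eq_empty_of_forall_notMem fun τ hτ => ?_
      obtain ⟨⟨v, hv, hvs⟩, -⟩ := mem_signPatterns.mp hτ
      have hva : v a = 0 := hV hv
      simpa [hva] using hvs a (mem_insert_self a s)
    · have hlt := Submodule.finrank_lt_finrank_of_lt (inf_lt_left.mpr hV)
      obtain ⟨d, hd⟩ := Nat.exists_eq_succ_of_ne_zero (by omega : Module.finrank ℝ V ≠ 0)
      calc _ ≤ _ := card_signPatterns_insert_le V ha
        _ ≤ orthantBound #s (d + 1) + orthantBound #s d :=
          add_le_add ((ih V).trans_eq (congrArg _ hd))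
            ((ih _).trans (orthantBound_mono _ (by omega)))
        _ = _ := by rw [hd]; rfl

open scoped Classical in
lemma card_orthants_meeting_le (V : Submodule ℝ (ι → ℝ)) :
    #{τ : ι → Bool | ∃ v ∈ V, v ∈ orthant τ}
      ≤ orthantBound (Fintype.card ι) (Module.finrank ℝ V) := by
  have : univ.filter (fun τ : ι → Bool => ∃ v ∈ V, v ∈ orthant τ) = signPatterns V univ := by
    ext τ
    rw [Finset.mem_filter]
    simp [mem_signPatterns, orthant]
  rw [this]
  exact card_signPatterns_le V univ

end Counting

section Kernel

variable {m ι : Type*} [Fintype m] [Fintype ι]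

lemma linearIndependent_row_of_det_mul_ne_zero {K : Type*} [Field K] [DecidableEq m]
    {M : Matrix m ι K} {N : Matrix ι m K} (h : (M * N).det ≠ 0) : LinearIndependent K M.row := by
  rw [← vecMul_injective_iff]
  have hMN : Function.Injective (M * N).vecMul :=
    vecMul_injective_iff_isUnit.mpr ((isUnit_iff_isUnit_det _).mpr h.isUnit)
  refine Function.Injective.of_comp (f := fun y => y ᵥ* N) ?_
  simpa [Function.comp_def, vecMul_vecMul] using hMN

lemma finrank_ker_mulVecLin {K : Type*} [Field K] {M : Matrix m ι K}
    (h : LinearIndependent K M.row) :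
    Module.finrank K (LinearMap.ker M.mulVecLin) = Fintype.card ι - Fintype.card m := by
  have := LinearMap.finrank_range_add_finrank_ker M.mulVecLin
  rw [← Matrix.rank, h.rank_matrix, Module.finrank_fintype_fun_eq_card] at this
  omega

lemma det_mul_transpose_ne_zero [DecidableEq m] {M : Matrix m ι ℝ} (h : LinearIndependent ℝ M.row) :
    (M * Mᵀ).det ≠ 0 := by
  have := PosDef.mul_conjTranspose_self M (vecMul_injective_iff.mpr h)
  rw [conjTranspose_eq_transpose_of_trivial] at this
  exact this.det_pos.ne'

variable [DecidableEq m] [DecidableEq ι]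

/-- `det (M Mᵀ) • (1 - Mᵀ (M Mᵀ)⁻¹ M)`, a multiple of the orthogonal projection onto `ker M`
written with the adjugate, so that it is polynomial in `M`. -/
def scaledKerProj {R : Type*} [CommRing R] (M : Matrix m ι R) : Matrix ι ι R :=
  (M * Mᵀ).det • 1 - Mᵀ * (M * Mᵀ).adjugate * M

variable {R : Type*} [CommRing R]

lemma mul_scaledKerProj (M : Matrix m ι R) : M * scaledKerProj M = 0 := by
  rw [scaledKerProj, Matrix.mul_sub, Matrix.mul_smul, Matrix.mul_one, ← Matrix.mul_assoc,
    ← Matrix.mul_assoc, mul_adjugate, Matrix.smul_mul, Matrix.one_mul, sub_self]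

lemma scaledKerProj_mulVec {M : Matrix m ι R} {v : ι → R} (hv : M *ᵥ v = 0) :
    scaledKerProj M *ᵥ v = (M * Mᵀ).det • v := by
  rw [scaledKerProj, sub_mulVec, smul_mulVec, one_mulVec, ← mulVec_mulVec, hv, mulVec_zero,
    sub_zero]

lemma continuous_scaledKerProj [TopologicalSpace R] [IsTopologicalRing R] :
    Continuous (scaledKerProj : Matrix m ι R → Matrix ι ι R) := by
  have hMMt : Continuous fun M : Matrix m ι R => M * Mᵀ :=
    continuous_id.matrix_mul continuous_id.matrix_transpose
  exact (hMMt.matrix_det.smul continuous_const).sub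
    ((continuous_id.matrix_transpose.matrix_mul hMMt.matrix_adjugate).matrix_mul continuous_id)

lemma isOpen_setOf_linearIndependent_row_and_mulVec_eq_zero {U : Set (ι → ℝ)} (hU : IsOpen U) :
    IsOpen {M : Matrix m ι ℝ | LinearIndependent ℝ M.row ∧ ∃ v ∈ U, M *ᵥ v = 0} := by
  have : {M : Matrix m ι ℝ | LinearIndependent ℝ M.row ∧ ∃ v ∈ U, M *ᵥ v = 0}
      = {M | LinearIndependent ℝ M.row} ∩ ⋃ v, (fun M => scaledKerProj M *ᵥ v) ⁻¹' U := by
    ext M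
    simp only [Set.mem_ofPred_eq, Set.mem_inter_iff, Set.mem_iUnion, Set.mem_preimage]
    refine and_congr_right fun hM => ⟨fun ⟨w, hw, hMw⟩ => ⟨(M * Mᵀ).det⁻¹ • w, ?_⟩,
      fun ⟨v, hv⟩ => ⟨_, hv, by rw [mulVec_mulVec, mul_scaledKerProj, zero_mulVec]⟩⟩
    rwa [mulVec_smul, scaledKerProj_mulVec hMw, smul_smul,
      inv_mul_cancel₀ (det_mul_transpose_ne_zero hM), one_smul]
  rw [this]
  exact isOpen_setOfPred_linearIndependent.inter <| isOpen_iUnion fun v =>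
    hU.preimage (continuous_scaledKerProj.matrix_mulVec continuous_const)

end Kernel

section OrthantEvents

variable {m ι : Type*} [Fintype m] [Fintype ι]

def kerMeetsOrthant (τ : ι → Bool) : Set (Matrix m ι ℝ) :=
  {M | LinearIndependent ℝ M.row ∧ ∃ v ∈ orthant τ, M *ᵥ v = 0}

lemma isOpen_kerMeetsOrthant [DecidableEq m] [DecidableEq ι] (τ : ι → Bool) :
    IsOpen (kerMeetsOrthant (m := m) τ) :=
  isOpen_setOf_linearIndependent_row_and_mulVec_eq_zero (isOpen_orthant τ)

lemma mul_diagonal_mem_kerMeetsOrthant_iff [DecidableEq ι] (M : Matrix m ι ℝ) (τ : ι → Bool) :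
    M * diagonal (fun a => boolSign (τ a)) ∈ kerMeetsOrthant (fun _ => true) ↔
      M ∈ kerMeetsOrthant τ := by
  set D := diagonal fun a => boolSign (τ a)
  have hDD : D * D = 1 := by simp [D, boolSign_mul_self]
  have hDinj : Function.Injective D.vecMul :=
    Function.LeftInverse.injective (g := D.vecMul) fun x => by simp [vecMul_vecMul, hDD]
  have hrow : LinearIndependent ℝ (M * D).row ↔ LinearIndependent ℝ M.row := by
    rw [← vecMul_injective_iff, ← vecMul_injective_iff]
    simpa [Function.comp_def, vecMul_vecMul] using hDinj.of_comp_iff M.vecMul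
  have horth : ∀ v, v ∈ orthant (fun _ => true) ↔ D *ᵥ v ∈ orthant τ := fun v => by
    simp [orthant, D, mulVec_diagonal, ← mul_assoc, boolSign_mul_self]
  have hDD' : ∀ w, D *ᵥ (D *ᵥ w) = w := fun w => by rw [mulVec_mulVec, hDD, one_mulVec]
  simp only [kerMeetsOrthant, Set.mem_ofPred_eq, hrow]
  refine and_congr_right fun _ => ⟨fun ⟨v, hv, hMv⟩ => ?_, fun ⟨w, hw, hMw⟩ => ?_⟩
  · exact ⟨D *ᵥ v, (horth v).mp hv, by rwa [mulVec_mulVec]⟩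
  · refine ⟨D *ᵥ w, (horth _).mpr ((hDD' w).symm ▸ hw), ?_⟩
    rw [← mulVec_mulVec, hDD', hMw]

lemma kerMeetsOrthant_eq_empty (h : Fintype.card ι < Fintype.card m) (τ : ι → Bool) :
    kerMeetsOrthant (m := m) τ = ∅ := by
  refine Set.eq_empty_of_forall_notMem fun M ⟨hM, _⟩ => h.not_ge ?_
  simpa using hM.fintype_card_le_finrank

lemma measurableSet_kerMeetsOrthant [DecidableEq m] [DecidableEq ι] (τ : ι → Bool) :
    MeasurableSet (of ⁻¹' kerMeetsOrthant (m := m) τ) :=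
  ((isOpen_kerMeetsOrthant τ).preimage continuous_id.matrixOf).measurableSet

noncomputable def gaussianMatrix (m ι : Type*) [Fintype m] [Fintype ι] : Measure (m → ι → ℝ) :=
  Measure.pi fun _ => Measure.pi fun _ => gaussianReal 0 1

instance : IsProbabilityMeasure (gaussianMatrix m ι) := by
  unfold gaussianMatrix; infer_instance

lemma measurePreserving_mul_const_gaussianReal {c : ℝ} (hc : c * c = 1) (v : NNReal) :
    MeasurePreserving (· * c) (gaussianReal 0 v) (gaussianReal 0 v) := by
  refine ⟨measurable_mul_const c, ?_⟩
  rw [gaussianReal_map_mul_const, mul_zero]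
  congr
  ext
  simp [sq, hc]

/-- Flipping the signs of columns preserves the standard Gaussian law. -/
lemma gaussianMatrix_kerMeetsOrthant [DecidableEq m] [DecidableEq ι] (τ : ι → Bool) :
    gaussianMatrix m ι (of ⁻¹' kerMeetsOrthant τ)
      = gaussianMatrix m ι (of ⁻¹' kerMeetsOrthant fun _ => true) := by
  have hflip : MeasurePreserving (fun (M : m → ι → ℝ) i a => M i a * boolSign (τ a))
      (gaussianMatrix m ι) (gaussianMatrix m ι) :=
    measurePreserving_pi _ _ fun _ => measurePreserving_pi _ _ fun a =>
      measurePreserving_mul_const_gaussianReal (boolSign_mul_self (τ a)) 1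
  have hpre : (fun (M : m → ι → ℝ) i a => M i a * boolSign (τ a)) ⁻¹'
      (of ⁻¹' kerMeetsOrthant fun _ => true) = of ⁻¹' kerMeetsOrthant τ := by
    ext M
    have : of (fun i a => M i a * boolSign (τ a)) = of M * diagonal fun a => boolSign (τ a) := by
      ext i a
      simp [mul_diagonal]
    simp only [Set.mem_preimage, this, mul_diagonal_mem_kerMeetsOrthant_iff]
  rw [← hpre, hflip.measure_preimage (measurableSet_kerMeetsOrthant _).nullMeasurableSet]

open scoped Classical in
lemma card_kerMeetsOrthant_le [DecidableEq ι] (M : Matrix m ι ℝ) :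
    #{τ | M ∈ kerMeetsOrthant τ}
      ≤ orthantBound (Fintype.card ι) (Fintype.card ι - Fintype.card m) := by
  rcases eq_empty_or_nonempty {τ | M ∈ kerMeetsOrthant τ} with h | ⟨τ₀, hτ₀⟩
  · simp [h]
  have hM : LinearIndependent ℝ M.row := (mem_filter.mp hτ₀).2.1
  calc #{τ | M ∈ kerMeetsOrthant τ}
      ≤ #{τ : ι → Bool | ∃ v ∈ LinearMap.ker M.mulVecLin, v ∈ orthant τ} := by
        refine card_le_card <| monotone_filter_right _ fun τ _ hτ => ?_
        obtain ⟨-, v, hv, hMv⟩ := hτ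
        exact ⟨v, hMv, hv⟩
    _ ≤ _ := card_orthants_meeting_le _
    _ = _ := by rw [finrank_ker_mulVecLin hM]

lemma sum_measure_kerMeetsOrthant_le [DecidableEq m] [DecidableEq ι] (μ : Measure (m → ι → ℝ))
    [IsProbabilityMeasure μ] :
    ∑ τ : ι → Bool, μ (of ⁻¹' kerMeetsOrthant τ)
      ≤ orthantBound (Fintype.card ι) (Fintype.card ι - Fintype.card m) := by
  classical
  have hmeas := measurableSet_kerMeetsOrthant (m := m) (ι := ι)
  calc ∑ τ : ι → Bool, μ (of ⁻¹' kerMeetsOrthant τ)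
      = ∫⁻ M, ∑ τ : ι → Bool, (of ⁻¹' kerMeetsOrthant τ).indicator 1 M ∂μ := by
        rw [lintegral_finsetSum _ fun τ _ => measurable_one.indicator (hmeas τ)]
        simp only [lintegral_indicator_one (hmeas _)]
    _ ≤ ∫⁻ _, (orthantBound (Fintype.card ι) (Fintype.card ι - Fintype.card m) : ℝ≥0∞) ∂μ := by
        refine lintegral_mono fun M => ?_
        simp only [Set.indicator_apply, Set.mem_preimage, Pi.one_apply, sum_boole]
        exact_mod_cast card_kerMeetsOrthant_le (of M)
    _ = _ := by simp

variable [DecidableEq m] [DecidableEq ι]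

lemma two_pow_mul_gaussianMatrix_le :
    2 ^ Fintype.card ι * gaussianMatrix m ι (of ⁻¹' kerMeetsOrthant fun _ => true)
      ≤ orthantBound (Fintype.card ι) (Fintype.card ι - Fintype.card m) := by
  calc 2 ^ Fintype.card ι * gaussianMatrix m ι (of ⁻¹' kerMeetsOrthant fun _ => true)
      = ∑ τ : ι → Bool, gaussianMatrix m ι (of ⁻¹' kerMeetsOrthant τ) := by
        simp [gaussianMatrix_kerMeetsOrthant]
    _ ≤ _ := sum_measure_kerMeetsOrthant_le _

lemma gaussianMatrix_kerMeetsOrthant_le (hm : 1 ≤ Fintype.card m) :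
    gaussianMatrix m ι (of ⁻¹' kerMeetsOrthant fun _ => true)
      ≤ 1 / 2 ^ (Fintype.card m - 1) * ((Fintype.card ι).choose (Fintype.card m) : ℝ≥0∞) := by
  set n := Fintype.card m
  set t := Fintype.card ι
  set p := gaussianMatrix m ι (of ⁻¹' kerMeetsOrthant fun _ => true)
  rcases lt_or_ge t n with htn | hnt
  · simp [p, kerMeetsOrthant_eq_empty htn]
  have hB := orthantBound_le (Nat.sub_le t n)
  rw [Nat.choose_symm hnt] at hB
  have hsplit : (2 : ℝ≥0∞) ^ t = 2 ^ (t - n + 1) * 2 ^ (n - 1) := by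
    rw [← pow_add]; congr 1; omega
  have key : 2 ^ (t - n + 1) * (2 ^ (n - 1) * p) ≤ 2 ^ (t - n + 1) * (t.choose n : ℝ≥0∞) :=
    calc 2 ^ (t - n + 1) * (2 ^ (n - 1) * p) = 2 ^ t * p := by rw [hsplit, mul_assoc]
      _ ≤ orthantBound t (t - n) := two_pow_mul_gaussianMatrix_le
      _ ≤ 2 ^ (t - n + 1) * (t.choose n : ℝ≥0∞) := by exact_mod_cast hB
  rw [ENNReal.mul_le_mul_iff_right (by positivity) (by simp)] at key
  rw [one_div, ← ENNReal.div_eq_inv_mul, ENNReal.le_div_iff_mul_le (by simp) (by simp), mul_comm]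
  exact key

end OrthantEvents

lemma zmon_pos {n : ℕ} (α : Fin n → ℤ) {x : Fin n → ℝ} (hx : ∀ i, 0 < x i) : 0 < zmon α x :=
  Finset.prod_pos fun i _ => zpow_pos (hx i) _

lemma differentiableAt_zmon {n : ℕ} (α : Fin n → ℤ) {x : Fin n → ℝ} (hx : ∀ i, x i ≠ 0) :
    DifferentiableAt ℝ (zmon α) x := by
  unfold zmon
  fun_prop (disch := exact Or.inl (hx _))

lemma fderiv_sum_mul_apply {E ι : Type*} [NormedAddCommGroup E] [NormedSpace ℝ E] [Fintype ι]
    {g : ι → E → ℝ} {x : E} (hg : ∀ a, DifferentiableAt ℝ (g a) x) (c : ι → ℝ) (y : E) :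
    fderiv ℝ (fun z => ∑ a, c a * g a z) x y = ∑ a, c a * fderiv ℝ (g a) x y := by
  rw [fderiv_fun_sum fun a _ => (hg a).const_mul (c a)]
  simp [fderiv_const_mul (hg _)]

lemma mem_kerMeetsOrthant_of_nondegenerate_zero {n : ℕ} {A : Finset (Fin n → ℤ)}
    {σ : (Fin n → ℤ) → ℝ} (hσ : ∀ α ∈ A, 0 < σ α) {ξ : Fin n → {α // α ∈ A} → ℝ}
    {x : Fin n → ℝ} (hx : ∀ i, 0 < x i)
    (hzero : ∀ i, ∑ α : {α // α ∈ A}, σ α.1 * ξ i α * zmon α.1 x = 0)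
    (hdet : (Matrix.of fun i j : Fin n =>
      fderiv ℝ (fun y => ∑ α : {α // α ∈ A}, σ α.1 * ξ i α * zmon α.1 y) x (Pi.single j 1)).det
        ≠ 0) :
    of ξ ∈ kerMeetsOrthant fun _ => true := by
  set K : Matrix {α // α ∈ A} (Fin n) ℝ :=
    of fun α j => σ α.1 * fderiv ℝ (zmon α.1) x (Pi.single j 1)
  have hJ : (Matrix.of fun i j : Fin n =>
      fderiv ℝ (fun y => ∑ α : {α // α ∈ A}, σ α.1 * ξ i α * zmon α.1 y) x (Pi.single j 1))
        = of ξ * K := by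
    ext i j
    refine (fderiv_sum_mul_apply (g := fun α : {α // α ∈ A} => zmon α.1)
      (fun α => differentiableAt_zmon α.1 fun k => (hx k).ne') (fun α => σ α.1 * ξ i α) _).trans ?_
    exact Finset.sum_congr rfl fun α _ => by simp only [of_apply, K]; ring
  refine ⟨linearIndependent_row_of_det_mul_ne_zero (hJ ▸ hdet),
    fun α => σ α.1 * zmon α.1 x, fun α => ?_, funext fun i => ?_⟩
  · simpa using mul_pos (hσ _ α.2) (zmon_pos α.1 hx)
  · exact (Finset.sum_congr rfl fun α _ => by simp only [of_apply]; ring).trans (hzero i)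

end Fewnomial

/-- **Corollary (probability of a nondegenerate positive solution).** For every `n ≥ 1`,
finite support `A ⊆ ℤⁿ` of cardinality `t` and variances `σ : A → ℝ_{>0}`, the
probability that the random fewnomial system `fᵢ(x) = ∑_{α ∈ A} σ(α) ξ_{i,α} x^α`
(i.i.d. standard Gaussian `ξ_{i,α}`) has at least one nondegenerate zero in `ℝ_{>0}ⁿ` is
at most `(1/2^{n-1})·C(t,n)`. -/
theorem probability_nondegenerate_zero_le (n : ℕ) (hn : 1 ≤ n) (A : Finset (Fin n → ℤ))
    (t : ℕ) (ht : A.card = t) (σ : (Fin n → ℤ) → ℝ) (hσ : ∀ α ∈ A, 0 < σ α) :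
    (Measure.pi fun _ : Fin n => Measure.pi fun _ : {α // α ∈ A} => gaussianReal 0 1)
      {ξ : Fin n → {α // α ∈ A} → ℝ | ∃ x : Fin n → ℝ, (∀ i, 0 < x i) ∧
        (∀ i, (∑ α : {α // α ∈ A}, σ α.1 * ξ i α * zmon α.1 x) = 0) ∧
        (Matrix.of fun i j : Fin n =>
            fderiv ℝ (fun y => ∑ α : {α // α ∈ A}, σ α.1 * ξ i α * zmon α.1 y) x
              (Pi.single j 1)).det ≠ 0}
    ≤ (1 / 2 ^ (n - 1)) * (t.choose n : ℝ≥0∞) := by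
  have hbound := Fewnomial.gaussianMatrix_kerMeetsOrthant_le (m := Fin n) (ι := {α // α ∈ A})
    (by simpa using hn)
  rw [Fintype.card_fin, Fintype.card_coe, ht] at hbound
  refine le_trans (measure_mono ?_) hbound
  rintro ξ ⟨x, hx, hzero, hdet⟩
  exact Fewnomial.mem_kerMeetsOrthant_of_nondegenerate_zero hσ hx hzero hdet
end
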